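/- Let ε > 0, let τ_n > 0 satisfy τ_n ≤ 4ε, and let r_n ≥ 0; set b_0^{(n)} := (1+2r_n)/(τ_n(1+r_n)) and b_1^{(n)} := −r_n²/(τ_n(1+r_n)). Then for any periodic grid functions φ^{n−1} and ψ (with ψ := φ^{n−1} − φ^{n−2} in the BDF2 scheme), there exists a unique periodic grid function z satisfying, at every grid point, b_0^{(n)} (z − φ^{n−1}) + b_1^{(n)} ψ + ε Δ_h² z + ∇_h · f(∇_h z) = 0; that is, the variable-step BDF2 scheme for the no-slope-selection MBE equation is uniquely solvable under τ_n ≤ 4ε. -/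

import Mathlib

/-!
Write the scheme as `A z = g` with `A z = c z + ε Δ_h² z + ∇_h · f(∇_h z)`, where `c = b₀` satisfies
`c ≥ 1/(4ε)` because `τ ≤ 4ε` and `r ≥ 0`.

Existence: `A z - g` is the gradient of
`E z = Σ (c/2 z² - g z + ε/2 (Δ_h z)² - ½ log(1 + |∇_h z|²))`.
The logarithm grows only linearly in `z`, so `E` is coercive and its minimiser solves `A z = g`.

Uniqueness: `A` is strongly monotone. For `e = z - w`, summation by parts turns the nonlinear
term of `⟨A z - A w, e⟩` into `-⟨f(∇_h z) - f(∇_h w), ∇_h e⟩ ≥ -|∇_h e|²`, as `f` is 1-Lipschitz. The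
central difference satisfies `Δ_x² = δ_x² + (h²/4) δ_x⁴`, which gives
`|∇_h e|² ≤ -⟨e, Δ_h e⟩ - (h²/8) |Δ_h e|²`. Young's inequality with weight `ε + h²/8` then yields
`⟨A z - A w, e⟩ ≥ (c - 1/(4ε + h²/2)) |e|²`; since `h ≠ 0`, the gap `h²/8` makes the constant
positive even when `c = 1/(4ε)`.
-/

open Finset

/-- Central difference in the first index: `Δ_x v_{ij} = (v_{i+1,j} − v_{i−1,j})/(2h)`. -/
noncomputable def Dx (M : ℕ) (h : ℝ) (v : ZMod M → ZMod M → ℝ) :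
    ZMod M → ZMod M → ℝ :=
  fun i j => (v (i + 1) j - v (i - 1) j) / (2 * h)

/-- Central difference in the second index. -/
noncomputable def Dy (M : ℕ) (h : ℝ) (v : ZMod M → ZMod M → ℝ) :
    ZMod M → ZMod M → ℝ :=
  fun i j => (v i (j + 1) - v i (j - 1)) / (2 * h)

/-- Second difference in the first index: `δ_x² v_{ij}`. -/
noncomputable def Dxx (M : ℕ) (h : ℝ) (v : ZMod M → ZMod M → ℝ) :
    ZMod M → ZMod M → ℝ :=
  fun i j => (v (i + 1) j - 2 * v i j + v (i - 1) j) / h ^ 2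

/-- Second difference in the second index: `δ_y² v_{ij}`. -/
noncomputable def Dyy (M : ℕ) (h : ℝ) (v : ZMod M → ZMod M → ℝ) :
    ZMod M → ZMod M → ℝ :=
  fun i j => (v i (j + 1) - 2 * v i j + v i (j - 1)) / h ^ 2

/-- Discrete Laplacian `Δ_h v := δ_x² v + δ_y² v`. -/
noncomputable def lap (M : ℕ) (h : ℝ) (v : ZMod M → ZMod M → ℝ) :
    ZMod M → ZMod M → ℝ :=
  fun i j => Dxx M h v i j + Dyy M h v i j

/-- Discrete `L²` inner product `⟨v, w⟩ := h² Σ_{i,j} v_{ij} w_{ij}`. -/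
noncomputable def gip (M : ℕ) [NeZero M] (h : ℝ) (v w : ZMod M → ZMod M → ℝ) : ℝ :=
  h ^ 2 * ∑ i : ZMod M, ∑ j : ZMod M, v i j * w i j

/-- Discrete `L²` norm. -/
noncomputable def gnorm (M : ℕ) [NeZero M] (h : ℝ) (v : ZMod M → ZMod M → ℝ) : ℝ :=
  Real.sqrt (gip M h v v)

/-- Discrete divergence of the nonlinear force applied to the discrete gradient:
`∇_h · f(∇_h v)` where `f(u) = u/(1+|u|²)`. -/
noncomputable def divf (M : ℕ) (h : ℝ) (v : ZMod M → ZMod M → ℝ) :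
    ZMod M → ZMod M → ℝ :=
  fun i j =>
    Dx M h (fun a b => Dx M h v a b / (1 + (Dx M h v a b) ^ 2 + (Dy M h v a b) ^ 2)) i j
      + Dy M h (fun a b => Dy M h v a b / (1 + (Dx M h v a b) ^ 2 + (Dy M h v a b) ^ 2)) i j

open Filter

abbrev GridFun (M : ℕ) := ZMod M → ZMod M → ℝ

section Stencils

variable {M : ℕ} (h : ℝ) (u v : GridFun M)

def shiftX (c : ZMod M) (u : GridFun M) : GridFun M := fun i j => u (i + c) j

lemma Dx_eq_shiftX : Dx M h u = (2 * h)⁻¹ • (shiftX 1 u - shiftX (-1) u) := by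
  ext i j
  simp only [Dx, shiftX, Pi.smul_apply, Pi.sub_apply, smul_eq_mul, ← sub_eq_add_neg]
  ring

lemma Dxx_eq_shiftX : Dxx M h u = (h ^ 2)⁻¹ • (shiftX 1 u - (2 : ℝ) • u + shiftX (-1) u) := by
  ext i j
  simp only [Dxx, shiftX, Pi.smul_apply, Pi.sub_apply, Pi.add_apply, smul_eq_mul,
    ← sub_eq_add_neg]
  ring

lemma Dy_eq_swap : Dy M h u = Function.swap (Dx M h (Function.swap u)) := rfl

lemma Dyy_eq_swap : Dyy M h u = Function.swap (Dxx M h (Function.swap u)) := rfl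

lemma lap_eq_add : lap M h u = Dxx M h u + Dyy M h u := rfl

lemma Dx_Dx : Dx M h (Dx M h u) = Dxx M h u + (h ^ 2 / 4) • Dxx M h (Dxx M h u) := by
  ext i j
  rcases eq_or_ne h 0 with rfl | hh
  · simp [Dx, Dxx]
  · simp only [Dx, Dxx, Pi.add_apply, Pi.smul_apply, smul_eq_mul, add_sub_cancel_right,
      sub_add_cancel]
    field_simp
    ring

lemma Dx_sub : Dx M h (u - v) = Dx M h u - Dx M h v := by
  ext i j; simp only [Dx, Pi.sub_apply]; ring

lemma Dy_sub : Dy M h (u - v) = Dy M h u - Dy M h v := by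
  ext i j; simp only [Dy, Pi.sub_apply]; ring

lemma lap_sub : lap M h (u - v) = lap M h u - lap M h v := by
  ext i j; simp only [lap, Dxx, Dyy, Pi.sub_apply]; ring

lemma Dx_add_smul (t : ℝ) : Dx M h (u + t • v) = Dx M h u + t • Dx M h v := by
  ext i j; simp only [Dx, Pi.add_apply, Pi.smul_apply, smul_eq_mul]; ring

lemma Dy_add_smul (t : ℝ) : Dy M h (u + t • v) = Dy M h u + t • Dy M h v := by
  ext i j; simp only [Dy, Pi.add_apply, Pi.smul_apply, smul_eq_mul]; ring

lemma lap_add_smul (t : ℝ) : lap M h (u + t • v) = lap M h u + t • lap M h v := by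
  ext i j; simp only [lap, Dxx, Dyy, Pi.add_apply, Pi.smul_apply, smul_eq_mul]; ring

end Stencils

section GridInner

variable {M : ℕ} [NeZero M]

/-- The pairing `gip` without its factor `h²`. -/
def gridInner (u v : GridFun M) : ℝ := ∑ i, ∑ j, u i j * v i j

variable (u u' v v' : GridFun M) (t : ℝ)

lemma gridInner_zero_left : gridInner 0 v = 0 := by
  simp only [gridInner, Pi.zero_apply, zero_mul, sum_const_zero]

lemma gridInner_comm : gridInner u v = gridInner v u := by
  simp only [gridInner, mul_comm]

lemma gridInner_add_left : gridInner (u + u') v = gridInner u v + gridInner u' v := by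
  simp only [gridInner, Pi.add_apply, add_mul, sum_add_distrib]

lemma gridInner_sub_left : gridInner (u - u') v = gridInner u v - gridInner u' v := by
  simp only [gridInner, Pi.sub_apply, sub_mul, sum_sub_distrib]

lemma gridInner_smul_left : gridInner (t • u) v = t * gridInner u v := by
  simp only [gridInner, Pi.smul_apply, smul_eq_mul, mul_assoc, mul_sum]

lemma gridInner_add_right : gridInner u (v + v') = gridInner u v + gridInner u v' := by
  simp only [gridInner_comm u, gridInner_add_left]

lemma gridInner_sub_right : gridInner u (v - v') = gridInner u v - gridInner u v' := by
  simp only [gridInner_comm u, gridInner_sub_left]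

lemma gridInner_smul_right : gridInner u (t • v) = t * gridInner u v := by
  simp only [gridInner_comm u, gridInner_smul_left]

lemma gridInner_swap : gridInner (Function.swap u) (Function.swap v) = gridInner u v :=
  sum_comm

lemma gridInner_self_nonneg : 0 ≤ gridInner u u :=
  sum_nonneg fun _ _ => sum_nonneg fun _ _ => mul_self_nonneg _

lemma gridInner_self_eq_zero : gridInner u u = 0 ↔ u = 0 := by
  refine ⟨fun hu => ?_, fun hu => hu ▸ gridInner_zero_left 0⟩
  ext i j
  have hrow := (sum_eq_zero_iff_of_nonneg fun i _ => sum_nonneg fun j _ =>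
    mul_self_nonneg (u i j)).1 hu i (mem_univ i)
  exact mul_self_eq_zero.1 ((sum_eq_zero_iff_of_nonneg fun j _ =>
    mul_self_nonneg (u i j)).1 hrow j (mem_univ j))

lemma sq_norm_le_gridInner_self : ‖u‖ ^ 2 ≤ gridInner u u := by
  have hu : ‖u‖ ≤ √(gridInner u u) := by
    rw [pi_norm_le_iff_of_nonneg (Real.sqrt_nonneg _)]
    intro i
    rw [pi_norm_le_iff_of_nonneg (Real.sqrt_nonneg _)]
    intro j
    refine Real.abs_le_sqrt ?_
    calc u i j ^ 2 = u i j * u i j := sq _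
      _ ≤ ∑ j', u i j' * u i j' :=
        single_le_sum (f := fun j' => u i j' * u i j') (fun j' _ => mul_self_nonneg _)
          (mem_univ j)
      _ ≤ gridInner u u :=
        single_le_sum (f := fun i' => ∑ j', u i' j' * u i' j')
          (fun i' _ => sum_nonneg fun j' _ => mul_self_nonneg _) (mem_univ i)
  calc ‖u‖ ^ 2 ≤ √(gridInner u u) ^ 2 := pow_le_pow_left₀ (norm_nonneg u) hu 2
    _ = gridInner u u := Real.sq_sqrt (gridInner_self_nonneg u)

lemma abs_apply_le_norm (z : GridFun M) (a b : ZMod M) : |z a b| ≤ ‖z‖ :=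
  (norm_le_pi_norm (z a) b).trans (norm_le_pi_norm z a)

lemma neg_gridInner_le (ht : 0 < t) :
    -gridInner u v ≤ gridInner u u / (4 * t) + t * gridInner v v := by
  simp only [gridInner, sum_div, mul_sum, ← sum_neg_distrib, ← sum_add_distrib]
  gcongr with i _ j _
  rw [div_add' _ _ _ (by positivity), le_div_iff₀ (by positivity)]
  nlinarith [sq_nonneg (u i j + 2 * t * v i j)]

end GridInner

section SummationByParts

variable {M : ℕ} [NeZero M] (h : ℝ) (u v : GridFun M)

lemma gridInner_shiftX_left (c : ZMod M) :
    gridInner (shiftX c u) v = gridInner u (shiftX (-c) v) := by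
  simpa [gridInner, shiftX] using
    Equiv.sum_comp (Equiv.addRight c) fun i => ∑ j, u i j * v (i + -c) j

lemma gridInner_Dx_left : gridInner (Dx M h u) v = -gridInner u (Dx M h v) := by
  simp only [Dx_eq_shiftX, gridInner_smul_left, gridInner_smul_right, gridInner_sub_left,
    gridInner_sub_right, gridInner_shiftX_left, neg_neg]
  ring

lemma gridInner_Dxx_left : gridInner (Dxx M h u) v = gridInner u (Dxx M h v) := by
  simp only [Dxx_eq_shiftX, gridInner_smul_left, gridInner_smul_right, gridInner_add_left,
    gridInner_add_right, gridInner_sub_left, gridInner_sub_right, gridInner_shiftX_left,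
    neg_neg]
  ring

lemma gridInner_Dy_left : gridInner (Dy M h u) v = -gridInner u (Dy M h v) := by
  rw [Dy_eq_swap, Dy_eq_swap]
  exact (gridInner_swap _ (Function.swap v)).trans <| (gridInner_Dx_left h _ _).trans <|
    congrArg Neg.neg (gridInner_swap (Function.swap u) _).symm

lemma gridInner_Dyy_left : gridInner (Dyy M h u) v = gridInner u (Dyy M h v) := by
  rw [Dyy_eq_swap, Dyy_eq_swap]
  exact (gridInner_swap _ (Function.swap v)).trans <| (gridInner_Dxx_left h _ _).trans
    (gridInner_swap (Function.swap u) _).symm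

lemma gridInner_lap_left : gridInner (lap M h u) v = gridInner u (lap M h v) := by
  simp only [lap_eq_add, gridInner_add_left, gridInner_add_right, gridInner_Dxx_left,
    gridInner_Dyy_left]

lemma gridInner_Dx_self :
    gridInner (Dx M h u) (Dx M h u)
      = -gridInner u (Dxx M h u) - h ^ 2 / 4 * gridInner (Dxx M h u) (Dxx M h u) := by
  rw [gridInner_Dx_left, Dx_Dx, gridInner_add_right, gridInner_smul_right,
    ← gridInner_Dxx_left h u (Dxx M h u)]
  ring

lemma gridInner_Dy_self :
    gridInner (Dy M h u) (Dy M h u)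
      = -gridInner u (Dyy M h u) - h ^ 2 / 4 * gridInner (Dyy M h u) (Dyy M h u) := by
  simp only [Dy_eq_swap, Dyy_eq_swap, gridInner_swap, gridInner_Dx_self]
  rw [← gridInner_swap (Function.swap u)]

lemma gridInner_grad_self_le :
    gridInner (Dx M h u) (Dx M h u) + gridInner (Dy M h u) (Dy M h u)
      ≤ -gridInner u (lap M h u) - h ^ 2 / 8 * gridInner (lap M h u) (lap M h u) := by
  have hlap : gridInner (lap M h u) (lap M h u)
      ≤ 2 * (gridInner (Dxx M h u) (Dxx M h u) + gridInner (Dyy M h u) (Dyy M h u)) := by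
    simp only [gridInner, lap, mul_sum, ← sum_add_distrib]
    exact sum_le_sum fun i _ => sum_le_sum fun j _ => by
      nlinarith [sq_nonneg (Dxx M h u i j - Dyy M h u i j)]
  rw [gridInner_Dx_self, gridInner_Dy_self, lap_eq_add, gridInner_add_right]
  rw [lap_eq_add] at hlap
  nlinarith [mul_le_mul_of_nonneg_left hlap (by positivity : (0 : ℝ) ≤ h ^ 2 / 8)]

end SummationByParts

/-- True because the force `f(u) = u / (1 + |u|²)` is 1-Lipschitz. -/
lemma force_monotone (a₁ a₂ b₁ b₂ : ℝ) :
    (a₁ / (1 + a₁ ^ 2 + a₂ ^ 2) - b₁ / (1 + b₁ ^ 2 + b₂ ^ 2)) * (a₁ - b₁)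
      + (a₂ / (1 + a₁ ^ 2 + a₂ ^ 2) - b₂ / (1 + b₁ ^ 2 + b₂ ^ 2)) * (a₂ - b₂)
      ≤ (a₁ - b₁) ^ 2 + (a₂ - b₂) ^ 2 := by
  have ha : 0 < 1 + a₁ ^ 2 + a₂ ^ 2 := by positivity
  have hb : 0 < 1 + b₁ ^ 2 + b₂ ^ 2 := by positivity
  rw [div_sub_div _ _ ha.ne' hb.ne', div_sub_div _ _ ha.ne' hb.ne', div_mul_eq_mul_div,
    div_mul_eq_mul_div, ← add_div, div_le_iff₀ (mul_pos ha hb)]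
  nlinarith [sq_nonneg (a₁ ^ 2 + a₂ ^ 2 - b₁ ^ 2 - b₂ ^ 2),
    mul_nonneg (add_nonneg (sq_nonneg (a₁ - b₁)) (sq_nonneg (a₂ - b₂)))
      (add_nonneg (add_nonneg (sq_nonneg a₁) (sq_nonneg a₂))
        (add_nonneg (sq_nonneg b₁) (sq_nonneg b₂))),
    mul_nonneg (add_nonneg (sq_nonneg (a₁ - b₁)) (sq_nonneg (a₂ - b₂)))
      (mul_nonneg (add_nonneg (sq_nonneg a₁) (sq_nonneg a₂))
        (add_nonneg (sq_nonneg b₁) (sq_nonneg b₂)))]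

section Operator

variable {M : ℕ} (h : ℝ)

noncomputable def forceX (v : GridFun M) : GridFun M :=
  fun a b => Dx M h v a b / (1 + Dx M h v a b ^ 2 + Dy M h v a b ^ 2)

noncomputable def forceY (v : GridFun M) : GridFun M :=
  fun a b => Dy M h v a b / (1 + Dx M h v a b ^ 2 + Dy M h v a b ^ 2)

lemma divf_eq (v : GridFun M) : divf M h v = Dx M h (forceX h v) + Dy M h (forceY h v) := rfl

noncomputable def mbeOperator (ε c : ℝ) (z : GridFun M) : GridFun M :=
  c • z + ε • lap M h (lap M h z) + divf M h z

variable [NeZero M]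

lemma gridInner_divf_left (v u : GridFun M) :
    gridInner (divf M h v) u
      = -(gridInner (forceX h v) (Dx M h u) + gridInner (forceY h v) (Dy M h u)) := by
  rw [divf_eq, gridInner_add_left, gridInner_Dx_left, gridInner_Dy_left]
  ring

lemma neg_gridInner_grad_le_gridInner_divf_sub (z w : GridFun M) :
    -(gridInner (Dx M h (z - w)) (Dx M h (z - w)) + gridInner (Dy M h (z - w)) (Dy M h (z - w)))
      ≤ gridInner (divf M h z - divf M h w) (z - w) := by
  rw [gridInner_sub_left, gridInner_divf_left, gridInner_divf_left, neg_sub_neg,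
    neg_le_sub_iff_le_add, ← sub_nonneg]
  simp only [gridInner, Dx_sub, Dy_sub, Pi.sub_apply, ← sum_add_distrib, ← sum_sub_distrib]
  refine sum_nonneg fun i _ => sum_nonneg fun j _ => ?_
  have := force_monotone (Dx M h z i j) (Dy M h z i j) (Dx M h w i j) (Dy M h w i j)
  simp only [forceX, forceY]
  linarith

theorem mbeOperator_strongly_monotone {ε : ℝ} (hε : 0 < ε) (c : ℝ) (z w : GridFun M) :
    (c - 1 / (4 * (ε + h ^ 2 / 8))) * gridInner (z - w) (z - w)
      ≤ gridInner (mbeOperator h ε c z - mbeOperator h ε c w) (z - w) := by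
  set e := z - w
  have hsub : mbeOperator h ε c z - mbeOperator h ε c w
      = c • e + ε • lap M h (lap M h e) + (divf M h z - divf M h w) := by
    simp only [mbeOperator, e, lap_sub]
    module
  have hforce : -(gridInner (Dx M h e) (Dx M h e) + gridInner (Dy M h e) (Dy M h e))
      ≤ gridInner (divf M h z - divf M h w) e := neg_gridInner_grad_le_gridInner_divf_sub h z w
  have hgrad := gridInner_grad_self_le h e
  have hamgm := neg_gridInner_le e (lap M h e) _ (by positivity : 0 < ε + h ^ 2 / 8)
  rw [hsub, gridInner_add_left, gridInner_add_left, gridInner_smul_left, gridInner_smul_left,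
    gridInner_lap_left]
  linear_combination hforce + hgrad + hamgm

end Operator

theorem mbeOperator_injective {M : ℕ} [NeZero M] {h ε c : ℝ} (hh : h ≠ 0) (hε : 0 < ε)
    (hc : 1 / (4 * ε) ≤ c) :
    Function.Injective (mbeOperator (M := M) h ε c) := by
  intro z w hzw
  have hmono := mbeOperator_strongly_monotone h hε c z w
  rw [hzw, sub_self, gridInner_comm, gridInner_zero_left] at hmono
  have hgap : 0 < c - 1 / (4 * (ε + h ^ 2 / 8)) := by
    have : 1 / (4 * (ε + h ^ 2 / 8)) < 1 / (4 * ε) := by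
      gcongr
      exact lt_add_of_pos_right ε (by positivity)
    linarith
  exact sub_eq_zero.1 <| (gridInner_self_eq_zero _).1 <|
    le_antisymm (nonpos_of_mul_nonpos_right hmono hgap) (gridInner_self_nonneg _)

lemma half_log_one_add_sq_add_sq_le (x y : ℝ) : Real.log (1 + x ^ 2 + y ^ 2) / 2 ≤ |x| + |y| := by
  have hsq : 1 + x ^ 2 + y ^ 2 ≤ (1 + |x| + |y|) ^ 2 := by
    nlinarith [abs_nonneg x, abs_nonneg y, sq_abs x, sq_abs y,
      mul_nonneg (abs_nonneg x) (abs_nonneg y)]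
  have hlog := Real.log_le_log (by positivity) hsq
  rw [Real.log_pow] at hlog
  have := Real.log_le_sub_one_of_pos (show 0 < 1 + |x| + |y| by positivity)
  push_cast at hlog
  linarith

lemma abs_sub_div_two_mul_le {a b R : ℝ} (ha : |a| ≤ R) (hb : |b| ≤ R) (h : ℝ) :
    |(a - b) / (2 * h)| ≤ R / |h| := by
  rw [abs_div, abs_mul, abs_two, ← mul_div_mul_left R |h| two_ne_zero]
  exact div_le_div_of_nonneg_right (by linarith [abs_sub a b]) (by positivity)

lemma hasDerivAt_energy_density (c g ε u u' w w' a a' b b' : ℝ) :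
    HasDerivAt (fun t : ℝ => c / 2 * (u + t * u') ^ 2 - g * (u + t * u') + ε / 2 * (w + t * w') ^ 2
        - Real.log (1 + (a + t * a') ^ 2 + (b + t * b') ^ 2) / 2)
      (c * u * u' - g * u' + ε * w * w' - (a * a' + b * b') / (1 + a ^ 2 + b ^ 2)) 0 := by
  have hline : ∀ x x' : ℝ, HasDerivAt (fun t : ℝ => x + t * x') x' 0 := fun x x' => by
    simpa using ((hasDerivAt_id (0 : ℝ)).mul_const x').const_add x
  have hlog := ((((hline a a').fun_pow 2).const_add 1).fun_add ((hline b b').fun_pow 2)).log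
    (by positivity)
  refine (((((hline u u').fun_pow 2).const_mul (c / 2)).fun_sub
    ((hline u u').const_mul g)).fun_add (((hline w w').fun_pow 2).const_mul (ε / 2))).fun_sub
    (hlog.div_const 2) |>.congr_deriv ?_
  simp only [zero_mul, add_zero]
  field_simp
  ring

section Energy

variable {M : ℕ} [NeZero M] (h ε c : ℝ) (g : GridFun M)

noncomputable def mbeEnergy (z : GridFun M) : ℝ :=
  ∑ i, ∑ j, (c / 2 * z i j ^ 2 - g i j * z i j + ε / 2 * lap M h z i j ^ 2
    - Real.log (1 + Dx M h z i j ^ 2 + Dy M h z i j ^ 2) / 2)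

lemma continuous_mbeEnergy : Continuous (mbeEnergy h ε c g) := by
  unfold mbeEnergy lap Dxx Dyy Dx Dy
  fun_prop (disch := intro; positivity)

lemma hasDerivAt_mbeEnergy_line (z v : GridFun M) :
    HasDerivAt (fun t : ℝ => mbeEnergy h ε c g (z + t • v))
      (gridInner (mbeOperator h ε c z - g) v) 0 := by
  simp only [mbeEnergy, lap_add_smul, Dx_add_smul, Dy_add_smul, Pi.add_apply, Pi.smul_apply,
    smul_eq_mul]
  refine (HasDerivAt.fun_sum fun i _ => HasDerivAt.fun_sum fun j _ =>
    hasDerivAt_energy_density c (g i j) ε (z i j) (v i j) (lap M h z i j) (lap M h v i j)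
      (Dx M h z i j) (Dx M h v i j) (Dy M h z i j) (Dy M h v i j)).congr_deriv ?_
  rw [mbeOperator, gridInner_sub_left, gridInner_add_left, gridInner_add_left,
    gridInner_smul_left, gridInner_smul_left, gridInner_lap_left, gridInner_divf_left]
  simp only [gridInner, forceX, forceY, mul_sum, ← sum_neg_distrib, ← sum_add_distrib,
    ← sum_sub_distrib]
  exact sum_congr rfl fun i _ => sum_congr rfl fun j _ => by ring

variable {ε c}

lemma mbeEnergy_ge (hε : 0 ≤ ε) (hc : 0 ≤ c) (z : GridFun M) :
    c / 2 * ‖z‖ ^ 2 - (∑ i, ∑ j, (|g i j| + 2 / |h|)) * ‖z‖ ≤ mbeEnergy h ε c g z := by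
  have hquad : c / 2 * ‖z‖ ^ 2 ≤ ∑ i, ∑ j, c / 2 * z i j ^ 2 := by
    simp only [← mul_sum, sq (z _ _)]
    exact mul_le_mul_of_nonneg_left (sq_norm_le_gridInner_self z) (by positivity)
  have hpoint : ∀ i j, c / 2 * z i j ^ 2 - (|g i j| + 2 / |h|) * ‖z‖
      ≤ c / 2 * z i j ^ 2 - g i j * z i j + ε / 2 * lap M h z i j ^ 2
        - Real.log (1 + Dx M h z i j ^ 2 + Dy M h z i j ^ 2) / 2 := by
    intro i j
    have hgz : g i j * z i j ≤ |g i j| * ‖z‖ := by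
      calc g i j * z i j ≤ |g i j| * |z i j| := abs_mul (g i j) (z i j) ▸ le_abs_self _
        _ ≤ |g i j| * ‖z‖ := mul_le_mul_of_nonneg_left (abs_apply_le_norm z i j) (abs_nonneg _)
    have hlog := half_log_one_add_sq_add_sq_le (Dx M h z i j) (Dy M h z i j)
    have hDx : |Dx M h z i j| ≤ ‖z‖ / |h| :=
      abs_sub_div_two_mul_le (abs_apply_le_norm z _ _) (abs_apply_le_norm z _ _) h
    have hDy : |Dy M h z i j| ≤ ‖z‖ / |h| :=
      abs_sub_div_two_mul_le (abs_apply_le_norm z _ _) (abs_apply_le_norm z _ _) h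
    have hsplit : (|g i j| + 2 / |h|) * ‖z‖ = |g i j| * ‖z‖ + 2 * (‖z‖ / |h|) := by ring
    nlinarith [sq_nonneg (lap M h z i j)]
  calc c / 2 * ‖z‖ ^ 2 - (∑ i, ∑ j, (|g i j| + 2 / |h|)) * ‖z‖
      ≤ ∑ i, ∑ j, (c / 2 * z i j ^ 2 - (|g i j| + 2 / |h|) * ‖z‖) := by
        simp only [sum_sub_distrib, sum_mul]
        linarith
    _ ≤ mbeEnergy h ε c g z := sum_le_sum fun i _ => sum_le_sum fun j _ => hpoint i j

lemma tendsto_mbeEnergy_cocompact (hε : 0 ≤ ε) (hc : 0 < c) :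
    Tendsto (mbeEnergy h ε c g) (cocompact _) atTop := by
  set C := ∑ i, ∑ j, (|g i j| + 2 / |h|)
  have hquad : Tendsto (fun r : ℝ => r * (c / 2 * r - C)) atTop atTop :=
    tendsto_id.atTop_mul_atTop₀ <|
      tendsto_atTop_add_const_right _ (-C) (tendsto_id.const_mul_atTop (by positivity))
  refine tendsto_atTop_mono (mbeEnergy_ge h g hε hc.le) ?_
  exact (hquad.comp tendsto_norm_cocompact_atTop).congr fun z => by simp only [Function.comp]; ring

theorem exists_mbeOperator_eq (hε : 0 ≤ ε) (hc : 0 < c) :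
    ∃ z, mbeOperator h ε c z = g := by
  obtain ⟨z, hz⟩ :=
    (continuous_mbeEnergy h ε c g).exists_forall_le (tendsto_mbeEnergy_cocompact h g hε hc)
  refine ⟨z, sub_eq_zero.1 ((gridInner_self_eq_zero _).1 ?_)⟩
  have hmin : IsLocalMin (fun t : ℝ => mbeEnergy h ε c g (z + t • (mbeOperator h ε c z - g))) 0 :=
    Eventually.of_forall fun t => by simpa using hz _
  exact hmin.hasDerivAt_eq_zero (hasDerivAt_mbeEnergy_line h ε c g z _)

end Energy

theorem stmt15 (L : ℝ) (hL : 0 < L) (M : ℕ) [NeZero M] (h : ℝ) (hh : h = L / M)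
    (ε τn rn : ℝ) (hε : 0 < ε) (hτ : 0 < τn) (hτ4ε : τn ≤ 4 * ε) (hrn : 0 ≤ rn)
    (φ ψ : ZMod M → ZMod M → ℝ) :
    ∃! z : ZMod M → ZMod M → ℝ, ∀ i j : ZMod M,
      (1 + 2 * rn) / (τn * (1 + rn)) * (z i j - φ i j)
        + (-(rn ^ 2) / (τn * (1 + rn))) * ψ i j
        + ε * lap M h (lap M h z) i j
        + divf M h z i j = 0 := by
  have hh₀ : h ≠ 0 := hh ▸ div_ne_zero hL.ne' (Nat.cast_ne_zero.2 (NeZero.ne M))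
  have hτr : 0 < τn * (1 + rn) := by positivity
  set b₀ := (1 + 2 * rn) / (τn * (1 + rn))
  have hb₀ : 1 / (4 * ε) ≤ b₀ := by
    rw [div_le_div_iff₀ (by positivity) hτr]
    nlinarith
  set g : GridFun M := fun i j => b₀ * φ i j + rn ^ 2 / (τn * (1 + rn)) * ψ i j
  have hscheme : ∀ z : GridFun M, (∀ i j : ZMod M, b₀ * (z i j - φ i j)
      + (-(rn ^ 2) / (τn * (1 + rn))) * ψ i j + ε * lap M h (lap M h z) i j
      + divf M h z i j = 0) ↔ mbeOperator h ε b₀ z = g := by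
    intro z
    simp only [funext_iff, mbeOperator, Pi.add_apply, Pi.smul_apply, smul_eq_mul, g]
    refine forall₂_congr fun i j => ⟨fun hij => ?_, fun hij => ?_⟩ <;> linear_combination hij
  rw [existsUnique_congr hscheme]
  obtain ⟨z, hz⟩ := exists_mbeOperator_eq h g hε.le (by positivity : 0 < b₀)
  exact ⟨z, hz, fun w hw => mbeOperator_injective hh₀ hε hb₀ (hw.trans hz.symm)⟩
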